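/- arXiv:2412.20606 — 4 statements merged into one kernel-verified Lean document; each statement's English description precedes it below -/
import Mathlib

section
/- Let N be a positive integer and ℓ a prime with ℓ ∣ N and ℓ² ∤ N. Let a, b, a', b' be integers with ℓb − a(N/ℓ) = 1 and ℓb' − a'(N/ℓ) = 1, and set γ = [[ℓ, a],[N, ℓb]] and γ' = [[ℓ, a'],[N, ℓb']]. Then the rational matrix γ·(γ')⁻¹ has integer entries, determinant 1, and lower-left entry divisible by N (i.e. it lies in Γ₀(N)); consequently, for every integer k and every function f : ℍ → ℂ satisfying f(δ·z) = (cz+d)^k f(z) for all δ = [[α,β],[c,d]] ∈ Γ₀(N), one has (Nz+ℓb)^{−k} f(γ·z) = (Nz+ℓb')^{−k} f(γ'·z) for all z ∈ ℍ (so the Atkin–Lehner operator w_ℓ does not depend on the choice of a and b). -/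
open UpperHalfPlane Complex CongruenceSubgroup MatrixGroups Matrix

/-! Write `N = ℓ * M`. The relation `ℓ * b - a * M = 1` makes `γ = !![ℓ, a; N, ℓ * b]` of
determinant `ℓ`, and `δ = γ * γ'⁻¹ = γ * adj γ' / ℓ` is the integral matrix
`atkinLehnerTransition`, of determinant one and lower-left entry `N * (b' - b)`, so `δ ∈ Γ₀(N)`.
Since `δ * γ' = γ`, the element `δ` maps `γ' • z` to `γ • z` with automorphy factor
`j(γ, z) / j(γ', z)`, and the transformation law of `f` under `δ` becomes the claimed identity. -/

section AtkinLehner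

variable {R : Type*} [CommRing R] (ℓ M N a b a' b' : R)

def atkinLehnerMatrix : Matrix (Fin 2) (Fin 2) R := !![ℓ, a; N, ℓ * b]

def atkinLehnerTransition : Matrix (Fin 2) (Fin 2) R :=
  !![ℓ * b' - a * M, a - a'; N * (b' - b), ℓ * b - a' * M]

variable {ℓ M N a b a' b'}

theorem det_atkinLehnerMatrix (hM : ℓ * M = N) (hab : ℓ * b - a * M = 1) :
    (atkinLehnerMatrix ℓ N a b).det = ℓ := by
  rw [atkinLehnerMatrix, det_fin_two_of]
  linear_combination ℓ * hab + a * hM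

theorem det_atkinLehnerTransition (hM : ℓ * M = N) (hab : ℓ * b - a * M = 1)
    (hab' : ℓ * b' - a' * M = 1) : (atkinLehnerTransition ℓ M N a b a' b').det = 1 := by
  rw [atkinLehnerTransition, det_fin_two_of]
  linear_combination (ℓ * b' - a' * M) * hab + hab' + (a - a') * (b' - b) * hM

theorem atkinLehnerTransition_mul (hM : ℓ * M = N) (hab' : ℓ * b' - a' * M = 1) :
    atkinLehnerTransition ℓ M N a b a' b' * atkinLehnerMatrix ℓ N a' b' =
      atkinLehnerMatrix ℓ N a b := by
  ext i j
  fin_cases i <;> fin_cases j <;>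
    simp [atkinLehnerTransition, atkinLehnerMatrix, mul_apply, Fin.sum_univ_two]
  · linear_combination ℓ * hab' + (a' - a) * hM
  · linear_combination a * hab'
  · linear_combination N * hab'
  · linear_combination ℓ * b * hab' + (a' * b - a' * b') * hM

end AtkinLehner

theorem Matrix.intCast_map_mul {l m n : Type*} [Fintype m] {R : Type*} [Ring R]
    (A : Matrix l m ℤ) (B : Matrix m n ℤ) :
    (A * B).map (Int.cast : ℤ → R) = A.map (Int.cast : ℤ → R) * B.map (Int.cast : ℤ → R) :=
  Matrix.map_mul (f := Int.castRingHom R)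

theorem Matrix.intCast_map_eq_mul_inv_of_mul_eq {n : Type*} [Fintype n] [DecidableEq n]
    {K : Type*} [Field K] [CharZero K] {A B C : Matrix n n ℤ} (h : A * B = C) (hB : B.det ≠ 0) :
    A.map (Int.cast : ℤ → K) = C.map Int.cast * (B.map Int.cast)⁻¹ := by
  have hBK : IsUnit (B.map (Int.cast : ℤ → K)).det :=
    isUnit_iff_ne_zero.2 ((Int.cast_det (R := K) B).symm ▸ Int.cast_ne_zero.2 hB)
  rw [← h, intCast_map_mul, mul_nonsing_inv_cancel_right _ _ hBK]

theorem Matrix.linear_moebius_eq_mul_div {K : Type*} [Field K] (A B : Matrix (Fin 2) (Fin 2) K)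
    {z : K} (hB : B 1 0 * z + B 1 1 ≠ 0) (i : Fin 2) :
    A i 0 * ((B 0 0 * z + B 0 1) / (B 1 0 * z + B 1 1)) + A i 1 =
      ((A * B) i 0 * z + (A * B) i 1) / (B 1 0 * z + B 1 1) := by
  rw [eq_div_iff hB, add_mul, mul_assoc, div_mul_cancel₀ _ hB]
  simp only [mul_apply, Fin.sum_univ_two]
  ring

namespace UpperHalfPlane

theorem denom_ne_zero_of_coe_eq_div {w : ℍ} {p q : ℂ} (h : (w : ℂ) = p / q) : q ≠ 0 := by
  rintro rfl
  exact w.ne_zero (by simpa using h)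

theorem specialLinearGroup_linear_eq_of_mul_eq (δ : SL(2, ℤ)) {A B : Matrix (Fin 2) (Fin 2) ℂ}
    (hAB : (δ : Matrix (Fin 2) (Fin 2) ℤ).map (Int.cast : ℤ → ℂ) * B = A) {z w' : ℍ}
    (hw' : (w' : ℂ) = (B 0 0 * z + B 0 1) / (B 1 0 * z + B 1 1)) (i : Fin 2) :
    ((δ i 0 : ℤ) : ℂ) * w' + ((δ i 1 : ℤ) : ℂ) = (A i 0 * z + A i 1) / (B 1 0 * z + B 1 1) := by
  subst hAB
  rw [hw', ← linear_moebius_eq_mul_div _ _ (denom_ne_zero_of_coe_eq_div hw')]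
  simp

theorem specialLinearGroup_smul_eq_of_mul_eq (δ : SL(2, ℤ)) {A B : Matrix (Fin 2) (Fin 2) ℂ}
    (hAB : (δ : Matrix (Fin 2) (Fin 2) ℤ).map (Int.cast : ℤ → ℂ) * B = A) {z w w' : ℍ}
    (hw' : (w' : ℂ) = (B 0 0 * z + B 0 1) / (B 1 0 * z + B 1 1))
    (hw : (w : ℂ) = (A 0 0 * z + A 0 1) / (A 1 0 * z + A 1 1)) : δ • w' = w := by
  ext
  simp only [coe_specialLinearGroup_apply, eq_intCast, ofReal_intCast]
  rw [specialLinearGroup_linear_eq_of_mul_eq δ hAB hw',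
    specialLinearGroup_linear_eq_of_mul_eq δ hAB hw', hw,
    div_div_div_cancel_right₀ (denom_ne_zero_of_coe_eq_div hw')]

end UpperHalfPlane

theorem atkinLehner_independent_of_choice_general (N ℓ : ℕ) (hℓ : ℓ.Prime)
    (hdvd : ℓ ∣ N) (a b a' b' : ℤ)
    (hab : (ℓ : ℤ) * b - a * ((N / ℓ : ℕ) : ℤ) = 1)
    (hab' : (ℓ : ℤ) * b' - a' * ((N / ℓ : ℕ) : ℤ) = 1) :
    (∃ m : Matrix (Fin 2) (Fin 2) ℤ,
        m.map (Int.cast : ℤ → ℚ) =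
          (!![(ℓ : ℚ), (a : ℚ); (N : ℚ), (ℓ : ℚ) * (b : ℚ)] *
            (!![(ℓ : ℚ), (a' : ℚ); (N : ℚ), (ℓ : ℚ) * (b' : ℚ)])⁻¹) ∧
        m.det = 1 ∧ (N : ℤ) ∣ m 1 0) ∧
    (∀ (k : ℤ) (f : ℍ → ℂ),
      (∀ δ : SL(2, ℤ), δ ∈ Gamma0 N → ∀ z : ℍ,
        f (δ • z) =
          (((δ : Matrix (Fin 2) (Fin 2) ℤ) 1 0 : ℂ) * z +
            ((δ : Matrix (Fin 2) (Fin 2) ℤ) 1 1 : ℂ)) ^ k * f z) →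
      ∀ z w w' : ℍ,
        (w : ℂ) = ((ℓ : ℂ) * z + (a : ℂ)) / ((N : ℂ) * z + (ℓ : ℂ) * (b : ℂ)) →
        (w' : ℂ) = ((ℓ : ℂ) * z + (a' : ℂ)) / ((N : ℂ) * z + (ℓ : ℂ) * (b' : ℂ)) →
        ((N : ℂ) * z + (ℓ : ℂ) * (b : ℂ)) ^ (-k) * f w =
          ((N : ℂ) * z + (ℓ : ℂ) * (b' : ℂ)) ^ (-k) * f w') := by
  have hM : (ℓ : ℤ) * ((N / ℓ : ℕ) : ℤ) = N := mod_cast Nat.mul_div_cancel' hdvd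
  generalize ((N / ℓ : ℕ) : ℤ) = M at hM hab hab'
  have hγ {K : Type} [Field K] [CharZero K] (a b : ℤ) :
      (atkinLehnerMatrix (ℓ : ℤ) N a b).map (Int.cast : ℤ → K) =
        !![(ℓ : K), (a : K); (N : K), (ℓ : K) * (b : K)] := by
    ext i j; fin_cases i <;> fin_cases j <;> simp [atkinLehnerMatrix]
  have hmul := atkinLehnerTransition_mul (a := a) (b := b) hM hab'
  have hdet := det_atkinLehnerTransition hM hab hab'
  refine ⟨⟨_, ?_, hdet, b' - b, rfl⟩, ?_⟩
  · rw [← hγ, ← hγ]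
    refine intCast_map_eq_mul_inv_of_mul_eq hmul ?_
    rw [det_atkinLehnerMatrix hM hab']
    exact_mod_cast hℓ.ne_zero
  intro k f hf z w w' hw hw'
  let δ : SL(2, ℤ) := ⟨_, hdet⟩
  have hδ : δ ∈ Gamma0 N := Gamma0_mem.2 (by simp [δ, atkinLehnerTransition])
  have hδmul : (δ : Matrix (Fin 2) (Fin 2) ℤ).map (Int.cast : ℤ → ℂ) *
      !![(ℓ : ℂ), (a' : ℂ); (N : ℂ), (ℓ : ℂ) * (b' : ℂ)] =
        !![(ℓ : ℂ), (a : ℂ); (N : ℂ), (ℓ : ℂ) * (b : ℂ)] := by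
    rw [← hγ, ← hγ, ← hmul, intCast_map_mul]
  have hfw := hf δ hδ w'
  rw [specialLinearGroup_smul_eq_of_mul_eq δ hδmul hw' hw,
    specialLinearGroup_linear_eq_of_mul_eq δ hδmul hw' 1] at hfw
  have hD := denom_ne_zero_of_coe_eq_div hw
  rw [hfw, div_zpow, _root_.zpow_neg, _root_.zpow_neg]
  simp only [of_apply, cons_val', cons_val_zero, cons_val_fin_one, cons_val_one]
  field_simp

/-- independence of the Atkin–Lehner operator from the choice of the
auxiliary integers `a, b`. -/
theorem atkinLehner_independent_of_choice (N ℓ : ℕ) (hN : 0 < N) (hℓ : ℓ.Prime)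
    (hdvd : ℓ ∣ N) (hndvd : ¬ ℓ ^ 2 ∣ N) (a b a' b' : ℤ)
    (hab : (ℓ : ℤ) * b - a * ((N / ℓ : ℕ) : ℤ) = 1)
    (hab' : (ℓ : ℤ) * b' - a' * ((N / ℓ : ℕ) : ℤ) = 1) :
    (∃ m : Matrix (Fin 2) (Fin 2) ℤ,
        m.map (Int.cast : ℤ → ℚ) =
          (!![(ℓ : ℚ), (a : ℚ); (N : ℚ), (ℓ : ℚ) * (b : ℚ)] *
            (!![(ℓ : ℚ), (a' : ℚ); (N : ℚ), (ℓ : ℚ) * (b' : ℚ)])⁻¹) ∧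
        m.det = 1 ∧ (N : ℤ) ∣ m 1 0) ∧
    (∀ (k : ℤ) (f : ℍ → ℂ),
      (∀ δ : SL(2, ℤ), δ ∈ Gamma0 N → ∀ z : ℍ,
        f (δ • z) =
          (((δ : Matrix (Fin 2) (Fin 2) ℤ) 1 0 : ℂ) * z +
            ((δ : Matrix (Fin 2) (Fin 2) ℤ) 1 1 : ℂ)) ^ k * f z) →
      ∀ z w w' : ℍ,
        (w : ℂ) = ((ℓ : ℂ) * z + (a : ℂ)) / ((N : ℂ) * z + (ℓ : ℂ) * (b : ℂ)) →
        (w' : ℂ) = ((ℓ : ℂ) * z + (a' : ℂ)) / ((N : ℂ) * z + (ℓ : ℂ) * (b' : ℂ)) →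
        ((N : ℂ) * z + (ℓ : ℂ) * (b : ℂ)) ^ (-k) * f w =
          ((N : ℂ) * z + (ℓ : ℂ) * (b' : ℂ)) ^ (-k) * f w') :=
  atkinLehner_independent_of_choice_general N ℓ hℓ hdvd a b a' b' hab hab'
end

section
/- Let N be a positive integer, ℓ a prime dividing N exactly once, a, b integers with ℓb − a(N/ℓ) = 1, and γ_ℓ = [[ℓ, a],[N, ℓb]]. Let k be a natural number and let f, g ∈ M_k(Γ₀(N/ℓ)) satisfy f(z) = (ℓ:ℝ)^{k/2}·(Nz+ℓb)^{−k}·g(γ_ℓ·z) for all z ∈ ℍ (i.e. f = W_ℓ g lies in M_k(Γ₀(N/ℓ)) ∩ W_ℓ(M_k(Γ₀(N/ℓ)))). Then f is a constant function. -/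
/-!
Put `M = N / ℓ`, `c = ℓ ^ (k / 2)` and `γ = !![ℓ, a; N, ℓb]`. Both
`γ = !![1, a; M, ℓb] * diag(ℓ, 1)` and `γ * !![b, -a; -M, ℓ] = diag(1, ℓ)` hold with the integer
factors in `Γ₀(M)`, so the invariance of `g`, resp. `f`, turns the hypothesis into
`f z = c g(ℓz)` and `c g w = ℓ ^ k f(ℓw)`. Hence `f z = ℓ ^ k f(ℓ²z)`, and since `1` is a period
of `f`, so is every `ℓ ^ (-2n)`. A holomorphic function on `ℍ` whose periods accumulate at `0` is
constant by the identity theorem.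
-/

open UpperHalfPlane Complex CongruenceSubgroup MatrixGroups Filter Topology
open scoped Manifold

def sl2OfDet (p q r s : ℤ) (h : p * s - q * r = 1) : SL(2, ℤ) :=
  ⟨!![p, q; r, s], by rw [Matrix.det_fin_two_of]; exact h⟩

section SL2OfDet

variable {p q r s : ℤ} (h : p * s - q * r = 1)

lemma coe_sl2OfDet_smul (z : ℍ) :
    ((sl2OfDet p q r s h • z : ℍ) : ℂ) = (p * z + q) / (r * z + s) := by
  rw [coe_specialLinearGroup_apply]; simp [sl2OfDet]

lemma denom_sl2OfDet (z : ℍ) : denom (sl2OfDet p q r s h) z = r * z + s := by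
  rw [ModularGroup.denom_apply]; simp [sl2OfDet]

lemma sl2OfDet_mem_Gamma0 {M : ℕ} (hr : (M : ℤ) ∣ r) : sl2OfDet p q r s h ∈ Gamma0 M := by
  rw [Gamma0_mem]; simpa [sl2OfDet] using (ZMod.intCast_zmod_eq_zero_iff_dvd r M).2 hr

lemma apply_sl2OfDet_smul {M : ℕ} {k : ℤ} {F : Type*} [FunLike F ℍ ℂ]
    [SlashInvariantFormClass F (Gamma0 M) k] (f : F) (hr : (M : ℤ) ∣ r) (z : ℍ) :
    f (sl2OfDet p q r s h • z) = (r * z + s) ^ k * f z := by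
  rw [SlashInvariantForm.slash_action_eqn_SL'' f (sl2OfDet_mem_Gamma0 h hr), denom_sl2OfDet]

end SL2OfDet

lemma linear_ne_zero_of_det_eq_one {p q r s : ℤ} (h : p * s - q * r = 1) (z : ℍ) :
    (r * z + s : ℂ) ≠ 0 :=
  denom_sl2OfDet h z ▸ denom_ne_zero _ z

namespace UpperHalfPlane

lemma coe_pos_real_smul_of_eq {r : {x : ℝ // 0 < x}} {x : ℝ} (hr : (r : ℝ) = x) (z : ℍ) :
    ((r • z : ℍ) : ℂ) = x * z := by
  rw [coe_pos_real_smul, hr, Complex.real_smul]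

lemma pos_real_smul_vadd (r : {x : ℝ // 0 < x}) (t : ℝ) (z : ℍ) :
    r • (t +ᵥ z) = ((r : ℝ) * t) +ᵥ r • z := by
  ext; simp

lemma tendsto_vadd_nhdsNE (τ : ℍ) :
    Tendsto (fun t : ℝ ↦ t +ᵥ τ) (𝓝[≠] 0) (𝓝[≠] τ) := by
  have hcont : Continuous fun t : ℝ ↦ t +ᵥ τ :=
    isEmbedding_coe.continuous_iff.2 (by simp only [Function.comp_def, coe_vadd]; fun_prop)
  simpa using (hcont.continuousWithinAt (s := {0}ᶜ) (x := 0)).tendsto_nhdsWithin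
    (t := {τ}ᶜ) fun t ht ↦ by simpa [UpperHalfPlane.ext_iff] using ht

lemma exists_eq_const_of_vadd_invariant {F : ℍ → ℂ} (hF : MDiff F) {t : ℕ → ℝ}
    (ht : Tendsto t atTop (𝓝[≠] 0)) (hper : ∀ n z, F (t n +ᵥ z) = F z) :
    ∃ c, ∀ z, F z = c := by
  have hfreq : ∃ᶠ z in 𝓝[≠] I, F z - F I = 0 :=
    ((tendsto_vadd_nhdsNE I).comp ht).frequently (.of_forall fun n ↦ by simp [hper])
  have := eq_zero_of_frequently (hF.sub mdifferentiable_const) hfreq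
  exact ⟨F I, fun z ↦ sub_eq_zero.1 (congr_fun this z)⟩

lemma vadd_inv_pow_invariant {F : ℍ → ℂ} {R : {x : ℝ // 0 < x}} {μ : ℂ}
    (hscale : ∀ z, F z = μ * F (R • z)) (hper : ∀ z, F ((1 : ℝ) +ᵥ z) = F z) (n : ℕ) (z : ℍ) :
    F (((R : ℝ)⁻¹ ^ n) +ᵥ z) = F z := by
  induction n generalizing z with
  | zero => simpa using hper z
  | succ n ih =>
    rw [hscale, pos_real_smul_vadd, pow_succ', ← mul_assoc, mul_inv_cancel₀ R.2.ne', one_mul,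
      ih, ← hscale]

lemma exists_eq_const_of_apply_eq_mul_apply_smul {F : ℍ → ℂ} (hF : MDiff F)
    {R : {x : ℝ // 0 < x}} (hR : 1 < (R : ℝ)) {μ : ℂ}
    (hscale : ∀ z, F z = μ * F (R • z)) (hper : ∀ z, F ((1 : ℝ) +ᵥ z) = F z) :
    ∃ c, ∀ z, F z = c := by
  refine exists_eq_const_of_vadd_invariant hF ?_ (vadd_inv_pow_invariant hscale hper)
  refine tendsto_nhdsWithin_iff.2 ⟨tendsto_pow_atTop_nhds_zero_of_lt_one (by positivity)
    (inv_lt_one_of_one_lt₀ hR), .of_forall fun n ↦ ?_⟩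
  exact (pow_pos (inv_pos.2 R.2) n).ne'

end UpperHalfPlane

/-- `f = c · (g ∣[k] γ)` up to the determinant factor, for `γ = !![ℓ, a; ℓM, ℓb]`. -/
def IsAtkinLehnerTransform (M ℓ : ℕ) (a b k : ℤ) (c : ℂ) (f g : ℍ → ℂ) : Prop :=
  ∀ z w : ℍ, (w : ℂ) = (ℓ * z + a) / (ℓ * M * z + ℓ * b) →
    f z = c * (ℓ * M * z + ℓ * b) ^ (-k) * g w

namespace IsAtkinLehnerTransform

variable {M ℓ : ℕ} {a b k : ℤ} {c : ℂ} {F : Type*} [FunLike F ℍ ℂ]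
  [SlashInvariantFormClass F (Gamma0 M) k] {f g : F} {r : {x : ℝ // 0 < x}}

theorem apply_eq_mul_apply_smul (hfg : IsAtkinLehnerTransform M ℓ a b k c f g)
    (hab : (ℓ : ℤ) * b - a * M = 1) (hr : (r : ℝ) = ℓ) (z : ℍ) :
    f z = c * g (r • z) := by
  -- `γ z = A (ℓ z)` for `A = !![1, a; M, ℓb] ∈ Γ₀(M)`, with the same automorphy factor.
  have hdet : 1 * (ℓ * b) - a * M = 1 := by linarith
  have hmod := apply_sl2OfDet_smul hdet g (dvd_refl _) (r • z)
  have hne := linear_ne_zero_of_det_eq_one hdet (r • z)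
  have hw := coe_sl2OfDet_smul hdet (r • z)
  simp only [coe_pos_real_smul_of_eq hr] at hmod hne hw
  push_cast at hmod hne hw
  have hden : (M * (ℓ * z) + ℓ * b : ℂ) = ℓ * M * z + ℓ * b := by ring
  rw [hden] at hmod hne hw
  rw [hfg z _ (by rw [hw]; ring), hmod, mul_assoc, ← mul_assoc (_ ^ (-k)), ← zpow_add₀ hne,
    neg_add_cancel, zpow_zero, one_mul]

theorem mul_apply_eq_apply_smul (hfg : IsAtkinLehnerTransform M ℓ a b k c f g)
    (hab : (ℓ : ℤ) * b - a * M = 1) (hr : (r : ℝ) = ℓ) (w : ℍ) :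
    c * g w = ℓ ^ k * f (r • w) := by
  -- `γ * δ = diag(1, ℓ)` for `δ = !![b, -a; -M, ℓ] ∈ Γ₀(M)`, so `γ` maps `z = δ (ℓ w)` to `w`.
  have hdet : b * ℓ - (-a) * (-M) = 1 := by linarith
  have habC : (ℓ * b - a * M : ℂ) = 1 := by exact_mod_cast hab
  set u := r • w
  set z := sl2OfDet b (-a) (-M) ℓ hdet • u
  have hmod := apply_sl2OfDet_smul hdet f (dvd_neg.2 (dvd_refl _)) u
  have hj := linear_ne_zero_of_det_eq_one hdet u
  have hz := coe_sl2OfDet_smul hdet u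
  push_cast at hmod hj hz
  have hℓ : (ℓ : ℂ) ≠ 0 := by
    have := r.2; rw [hr] at this; exact_mod_cast this.ne'
  have hu : (u : ℂ) = ℓ * w := coe_pos_real_smul_of_eq hr w
  replace hz : (z : ℂ) * (-M * u + ℓ) = b * u - a := by rw [hz, div_mul_cancel₀ _ hj]; ring
  have hden : (ℓ * M * z + ℓ * b : ℂ) * (-M * u + ℓ) = ℓ := by
    linear_combination (ℓ * M : ℂ) * hz + ℓ * habC
  have hnum : (ℓ * z + a : ℂ) * (-M * u + ℓ) = u := by
    linear_combination (ℓ : ℂ) * hz + u * habC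
  have hw : (w : ℂ) = (ℓ * z + a) / (ℓ * M * z + ℓ * b) := by
    rw [← mul_div_mul_right _ _ hj, hnum, hden, hu, mul_div_cancel_left₀ _ hℓ]
  have hfz := hfg z w hw
  rw [hmod, eq_div_of_mul_eq hj hden, zpow_neg, ← inv_zpow, inv_div, div_zpow] at hfz
  apply mul_left_cancel₀ (zpow_ne_zero k hj)
  rw [mul_left_comm _ _ (f u), hfz]
  field_simp

theorem apply_eq_pow_mul_apply_mul_smul (hfg : IsAtkinLehnerTransform M ℓ a b k c f g)
    (hab : (ℓ : ℤ) * b - a * M = 1) (hr : (r : ℝ) = ℓ) (z : ℍ) :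
    f z = ℓ ^ k * f ((r * r) • z) := by
  rw [hfg.apply_eq_mul_apply_smul hab hr, hfg.mul_apply_eq_apply_smul hab hr, mul_smul]

end IsAtkinLehnerTransform

theorem mem_inter_atkinLehner_image_is_constant_general (N ℓ : ℕ) (hℓ : ℓ.Prime)
    (hdvd : ℓ ∣ N) (a b : ℤ)
    (hab : (ℓ : ℤ) * b - a * ((N / ℓ : ℕ) : ℤ) = 1) (k : ℕ)
    (f g : ModularForm (Gamma0 (N / ℓ)) (k : ℤ))
    (hfg : ∀ z w : ℍ,
      (w : ℂ) = ((ℓ : ℂ) * z + (a : ℂ)) / ((N : ℂ) * z + (ℓ : ℂ) * (b : ℂ)) →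
      f z = (((ℓ : ℝ) ^ ((k : ℝ) / 2) : ℝ) : ℂ) *
        ((N : ℂ) * z + (ℓ : ℂ) * (b : ℂ)) ^ (-(k : ℤ)) * g w) :
    ∃ c : ℂ, ∀ z : ℍ, f z = c := by
  have hN : (N : ℂ) = ℓ * (N / ℓ : ℕ) := by exact_mod_cast (Nat.mul_div_cancel' hdvd).symm
  rw [hN] at hfg
  have hAL : IsAtkinLehnerTransform (N / ℓ) ℓ a b k _ f g := hfg
  have hℓ1 : (1 : ℝ) < ℓ := by exact_mod_cast hℓ.one_lt
  let r : {x : ℝ // 0 < x} := ⟨ℓ, zero_lt_one.trans hℓ1⟩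
  exact exists_eq_const_of_apply_eq_mul_apply_smul (ModularFormClass.holo f) (R := r * r)
    (one_lt_mul_of_lt_of_le hℓ1 hℓ1.le) (hAL.apply_eq_pow_mul_apply_mul_smul hab rfl)
    fun z ↦ SlashInvariantForm.vAdd_apply_of_mem_strictPeriods f z (by simp)

/-- a form lying in `M_k(Γ₀(N/ℓ)) ∩ W_ℓ(M_k(Γ₀(N/ℓ)))` is constant. -/
theorem mem_inter_atkinLehner_image_is_constant (N ℓ : ℕ) (hN : 0 < N) (hℓ : ℓ.Prime)
    (hdvd : ℓ ∣ N) (hndvd : ¬ ℓ ^ 2 ∣ N) (a b : ℤ)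
    (hab : (ℓ : ℤ) * b - a * ((N / ℓ : ℕ) : ℤ) = 1) (k : ℕ)
    (f g : ModularForm (Gamma0 (N / ℓ)) (k : ℤ))
    (hfg : ∀ z w : ℍ,
      (w : ℂ) = ((ℓ : ℂ) * z + (a : ℂ)) / ((N : ℂ) * z + (ℓ : ℂ) * (b : ℂ)) →
      f z = (((ℓ : ℝ) ^ ((k : ℝ) / 2) : ℝ) : ℂ) *
        ((N : ℂ) * z + (ℓ : ℂ) * (b : ℂ)) ^ (-(k : ℤ)) * g w) :
    ∃ c : ℂ, ∀ z : ℍ, f z = c :=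
  mem_inter_atkinLehner_image_is_constant_general N ℓ hℓ hdvd a b hab k f g hfg
end

section
/- Let N be a positive integer, ℓ a prime dividing N exactly once, a, b integers with ℓb − a(N/ℓ) = 1, and γ_ℓ = [[ℓ, a],[N, ℓb]]. Let k > 0 be a natural number and let f, g ∈ M_k(Γ₀(N/ℓ)) satisfy f(z) = ℓ^{k}·(Nz+ℓb)^{−k}·g(γ_ℓ·z) for all z ∈ ℍ (i.e. f lies in M_k(Γ₀(N/ℓ)) ∩ W_ℓ(M_k(Γ₀(N/ℓ))), with the Atkin–Lehner operator scaled so W_ℓ = ℓ^{k/2}w_ℓ). Then f = 0 and g = 0; in particular, for k > 0 the sum M_k(Γ₀(N/ℓ)) + W_ℓ(M_k(Γ₀(N/ℓ))) is direct. -/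
/-!
Write `N = ℓ M`. The matrix `γ_ℓ` factors as `[[1, a], [M, ℓ b]] * diag(ℓ, 1)` with the first
factor in `Γ₀(M)`, so the hypothesis says `f z = ℓ ^ k g (ℓ z)`; as `g` has period `1`, `f` has
period `1 / ℓ`. As `ℓ b - a M = 1`, this translation together with `Γ₀(M)` generates the
map `z ↦ ℓ² z + n`, and the automorphy factors give `f z = ℓ ^ k f (ℓ² z)`. Rescaling the period
`1` by `ℓ²` repeatedly shows that every `ℓ ^ (-2 n)` is a period of `f`; these accumulate at `0`,
so `f` is constant by the identity theorem, and then `f z = ℓ ^ k f (ℓ² z)` with `k ≠ 0` forces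
`f = 0`. Finally `g = 0` by `f z = ℓ ^ k g (ℓ z)`.
-/

open UpperHalfPlane Complex CongruenceSubgroup MatrixGroups Filter Topology
open scoped Manifold

theorem UpperHalfPlane.apply_div_vadd_eq_of_scaling {F G : ℍ → ℂ} {t : ℝ} (ht : 0 < t) {c : ℂ}
    (hFG : ∀ z w : ℍ, (w : ℂ) = t * z → F z = c * G w) {ε : ℝ} (hG : ∀ w, G (ε +ᵥ w) = G w)
    (z : ℍ) : F ((ε / t) +ᵥ z) = F z := by
  set w : ℍ := (⟨t, ht⟩ : {x : ℝ // 0 < x}) • z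
  have hw : (w : ℂ) = t * z := by simp [w]
  have ht0 : (t : ℂ) ≠ 0 := by exact_mod_cast ht.ne'
  have hεw : ((ε +ᵥ w : ℍ) : ℂ) = t * ((ε / t) +ᵥ z : ℍ) := by
    rw [coe_vadd, coe_vadd, hw]
    push_cast
    rw [mul_add, mul_div_cancel₀ _ ht0]
  rw [hFG _ _ hεw, hG, hFG z w hw]

theorem UpperHalfPlane.apply_eq_of_tendsto_periods {F : ℍ → ℂ} (hF : MDiff F) {ε : ℕ → ℝ}
    (hε : Tendsto ε atTop (𝓝[≠] 0)) (hper : ∀ n z, F (ε n +ᵥ z) = F z) (z w : ℍ) :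
    F w = F z := by
  have hana : AnalyticOnNhd ℂ (F ∘ ofComplex) {z | 0 < z.im} :=
    (mdifferentiable_iff.mp hF).analyticOnNhd isOpen_upperHalfPlaneSet
  obtain ⟨hε0, hεne⟩ := tendsto_nhdsWithin_iff.mp hε
  have hlim : Tendsto (fun n ↦ (ε n : ℂ) + z) atTop (𝓝[≠] (z : ℂ)) := by
    refine tendsto_nhdsWithin_iff.mpr ⟨?_, hεne.mono fun n hn ↦ ?_⟩
    · simpa using (Complex.continuous_ofReal.tendsto 0 |>.comp hε0).add_const (z : ℂ)
    · simpa using hn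
  have hfreq : ∃ᶠ x in 𝓝[≠] (z : ℂ), (F ∘ ofComplex) x = F z :=
    hlim.frequently <| Frequently.of_forall fun n ↦ by
      rw [Function.comp_apply, ← coe_vadd, ofComplex_apply, hper]
  simpa using hana.eqOn_of_preconnected_of_frequently_eq analyticOnNhd_const
    (convex_halfSpace_im_gt 0).isPreconnected z.im_pos hfreq w.im_pos

def ModularGroup.ofEntries (p q r s : ℤ) (h : p * s - q * r = 1) : SL(2, ℤ) :=
  ⟨!![p, q; r, s], by rw [Matrix.det_fin_two_of]; exact h⟩

namespace ModularGroup

variable {p q r s : ℤ} (h : p * s - q * r = 1)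

theorem coe_ofEntries_smul (z : ℍ) :
    ((ofEntries p q r s h • z : ℍ) : ℂ) = (p * z + q) / (r * z + s) := by
  rw [coe_specialLinearGroup_apply]; simp [ofEntries]

theorem denom_ofEntries (z : ℍ) : denom (ofEntries p q r s h) z = r * z + s := by
  rw [denom_apply]; simp [ofEntries]

theorem ofEntries_mem_Gamma0 {M : ℕ} (hr : (M : ℤ) ∣ r) : ofEntries p q r s h ∈ Gamma0 M := by
  rw [Gamma0_mem]
  exact (ZMod.intCast_zmod_eq_zero_iff_dvd r M).mpr hr

end ModularGroup

open ModularGroup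

namespace ModularForm

variable {M : ℕ} {k : ℤ} (f : ModularForm (Gamma0 M) k)

theorem apply_ofEntries_smul {p q r s : ℤ} (h : p * s - q * r = 1)
    (hr : (M : ℤ) ∣ r) (z : ℍ) : f (ofEntries p q r s h • z) = (r * z + s) ^ k * f z := by
  rw [SlashInvariantForm.slash_action_eqn_SL'' f (ofEntries_mem_Gamma0 h hr), denom_ofEntries]

theorem apply_intCast_vadd (n : ℤ) (z : ℍ) : f ((n : ℝ) +ᵥ z) = f z := by
  have hT : ofEntries 1 n 0 1 (by ring) • z = (n : ℝ) +ᵥ z := by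
    ext; rw [coe_ofEntries_smul, coe_vadd]; push_cast; ring
  simpa [hT] using apply_ofEntries_smul f (by ring : (1 : ℤ) * 1 - n * 0 = 1) (dvd_zero _) z

theorem apply_eq_zpow_mul_apply_of_periodic_inv {ℓ : ℕ} (hℓ : 0 < ℓ) (hcop : IsCoprime (ℓ : ℤ) M)
    (hf : ∀ z, f ((ℓ : ℝ)⁻¹ +ᵥ z) = f z) (z w : ℍ) (hw : (w : ℂ) = ℓ ^ 2 * z) :
    f z = ℓ ^ k * f w := by
  obtain ⟨u, v, huv⟩ : IsCoprime ((M : ℤ) + ℓ) (M * ℓ) := by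
    refine IsCoprime.mul_right ?_ ?_
    · simpa [add_comm] using hcop.add_mul_left_left 1
    · simpa using hcop.symm.add_mul_left_left 1
  -- `[[1, 0], [M, 1]] * [[1, ℓ⁻¹], [0, 1]] * A = [[ℓ, v + u / ℓ], [0, ℓ⁻¹]]`,
  -- which acts as `z ↦ ℓ² z + (ℓ v + u)`.
  have hdetA : (M + ℓ) * u - v * (-(M * ℓ)) = 1 := by linear_combination huv
  set A := ofEntries (M + ℓ) v (-(M * ℓ)) u hdetA
  set z₂ : ℍ := (ℓ : ℝ)⁻¹ +ᵥ (A • z)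
  have hℓ0 : (ℓ : ℂ) ≠ 0 := by exact_mod_cast hℓ.ne'
  set Q : ℂ := -(M * ℓ) * z + u with hQdef
  have hQ : Q ≠ 0 := by simpa [denom_ofEntries, A, hQdef] using denom_ne_zero A z
  have hz₂ : (z₂ : ℂ) = (ℓ ^ 2 * z + (ℓ * v + u)) / (ℓ * Q) := by
    simp only [z₂, A, coe_vadd, coe_ofEntries_smul]
    push_cast
    rw [← hQdef]
    field_simp
    linear_combination -hQdef
  have hden : M * (z₂ : ℂ) + 1 = ((ℓ : ℂ) * Q)⁻¹ := by
    have huvC : (u : ℂ) * (M + ℓ) + v * (M * ℓ) = 1 := by exact_mod_cast huv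
    rw [hz₂]
    field_simp
    linear_combination huvC - ℓ * hQdef
  have hBz₂ : ofEntries 1 0 M 1 (by ring) • z₂ = ((ℓ * v + u : ℤ) : ℝ) +ᵥ w := by
    ext
    rw [coe_vadd _ w, coe_ofEntries_smul, hw]
    push_cast
    rw [one_mul, add_zero, hden, div_inv_eq_mul, hz₂, div_mul_cancel₀ _ (mul_ne_zero hℓ0 hQ)]
    ring
  have hfw : f w = (M * (z₂ : ℂ) + 1) ^ k * Q ^ k * f z := by
    rw [← apply_intCast_vadd f (ℓ * v + u) w, ← hBz₂, apply_ofEntries_smul f _ (dvd_refl _),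
      hf, apply_ofEntries_smul f hdetA ⟨-ℓ, by ring⟩]
    push_cast
    ring
  have hℓQ : ((ℓ : ℂ) * Q)⁻¹ * Q = (ℓ : ℂ)⁻¹ := by
    rw [mul_inv_rev, mul_comm, ← mul_assoc, mul_inv_cancel₀ hQ, one_mul]
  rw [hfw, hden, ← mul_zpow, hℓQ, inv_zpow, mul_inv_cancel_left₀ (zpow_ne_zero _ hℓ0)]

theorem eq_zero_of_periodic_inv {ℓ : ℕ} (hℓ : 1 < ℓ) (hcop : IsCoprime (ℓ : ℤ) M)
    (hk : k ≠ 0) (hf : ∀ z, f ((ℓ : ℝ)⁻¹ +ᵥ z) = f z) : f = 0 := by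
  have hℓ2 : (1 : ℝ) < (ℓ : ℝ) ^ 2 := one_lt_pow₀ (by exact_mod_cast hℓ) two_ne_zero
  have hscale : ∀ z w : ℍ, (w : ℂ) = ((ℓ ^ 2 : ℝ) : ℂ) * z → f z = ℓ ^ k * f w := fun z w hw ↦
    f.apply_eq_zpow_mul_apply_of_periodic_inv (by omega) hcop hf z w (by simpa using hw)
  have hper : ∀ n z, f ((((ℓ : ℝ) ^ 2)⁻¹ ^ n) +ᵥ z) = f z := by
    intro n
    induction n with
    | zero => simpa using f.apply_intCast_vadd 1
    | succ n ih =>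
      intro z
      simpa [pow_succ, div_eq_mul_inv] using
        apply_div_vadd_eq_of_scaling (by positivity) hscale ih z
  have hlim : Tendsto (fun n ↦ ((ℓ : ℝ) ^ 2)⁻¹ ^ n) atTop (𝓝[≠] 0) :=
    (tendsto_pow_atTop_nhdsWithin_zero_of_lt_one (by positivity)
      (inv_lt_one_of_one_lt₀ hℓ2)).mono_right (nhdsWithin_mono _ fun _ hx ↦ ne_of_gt hx)
  have hℓk : (ℓ : ℂ) ^ k ≠ 1 := by
    have : ((ℓ : ℝ) ^ k) ≠ 1 := by
      rw [Ne, zpow_eq_one_iff_right₀ (by positivity) (by exact_mod_cast hℓ.ne')]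
      exact hk
    rwa [← ofReal_natCast, ← ofReal_zpow, Ne, ofReal_eq_one]
  ext z
  set w : ℍ := (⟨(ℓ : ℝ) ^ 2, by positivity⟩ : {x : ℝ // 0 < x}) • z
  have hz := hscale z w (by simp [w])
  rw [apply_eq_of_tendsto_periods (ModularFormClass.holo f) hlim hper z w] at hz
  have hz' : (1 - (ℓ : ℂ) ^ k) * f z = 0 := by linear_combination hz
  simpa [sub_eq_zero, hℓk.symm] using hz'

theorem apply_eq_zpow_mul_apply_of_atkinLehner {ℓ : ℕ} {a b : ℤ}
    (hab : (ℓ : ℤ) * b - a * M = 1) (g : ModularForm (Gamma0 M) k)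
    (hfg : ∀ z w : ℍ, (w : ℂ) = (ℓ * z + a) / (ℓ * M * z + ℓ * b) →
      f z = ℓ ^ k * (ℓ * M * z + ℓ * b) ^ (-k) * g w)
    (z w : ℍ) (hw : (w : ℂ) = ℓ * z) : f z = ℓ ^ k * g w := by
  have hdet : 1 * (ℓ * b) - a * M = 1 := by linear_combination hab
  set δ := ofEntries 1 a M (ℓ * b) hdet
  have hD : (M : ℂ) * (ℓ * z) + ℓ * b ≠ 0 := by
    have h := denom_ne_zero δ w
    rw [denom_ofEntries, hw] at h
    exact_mod_cast h
  rw [hfg z (δ • w) (by rw [coe_ofEntries_smul, hw]; push_cast; ring),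
    g.apply_ofEntries_smul hdet (dvd_refl _), hw]
  push_cast
  rw [show (ℓ : ℂ) * M * z + ℓ * b = M * (ℓ * z) + ℓ * b by ring, zpow_neg, mul_assoc,
    inv_mul_cancel_left₀ (zpow_ne_zero _ hD)]

end ModularForm

theorem inter_atkinLehner_image_eq_zero_general (N ℓ : ℕ) (hℓ : ℓ.Prime)
    (hdvd : ℓ ∣ N) (a b : ℤ)
    (hab : (ℓ : ℤ) * b - a * ((N / ℓ : ℕ) : ℤ) = 1) (k : ℕ) (hk : 0 < k)
    (f g : ModularForm (Gamma0 (N / ℓ)) (k : ℤ))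
    (hfg : ∀ z w : ℍ,
      (w : ℂ) = ((ℓ : ℂ) * z + (a : ℂ)) / ((N : ℂ) * z + (ℓ : ℂ) * (b : ℂ)) →
      f z = (ℓ : ℂ) ^ (k : ℤ) *
        ((N : ℂ) * z + (ℓ : ℂ) * (b : ℂ)) ^ (-(k : ℤ)) * g w) :
    f = 0 ∧ g = 0 := by
  have hN : (N : ℂ) = ℓ * (N / ℓ : ℕ) := by exact_mod_cast (Nat.mul_div_cancel' hdvd).symm
  rw [hN] at hfg
  have hrel := f.apply_eq_zpow_mul_apply_of_atkinLehner hab g hfg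
  have hcop : IsCoprime (ℓ : ℤ) (N / ℓ : ℕ) := ⟨b, -a, by linear_combination hab⟩
  have hℓ0 : (0 : ℝ) < ℓ := by exact_mod_cast hℓ.pos
  have hf : f = 0 := f.eq_zero_of_periodic_inv hℓ.one_lt hcop (by exact_mod_cast hk.ne')
    fun z ↦ by simpa using apply_div_vadd_eq_of_scaling hℓ0 hrel (g.apply_intCast_vadd 1) z
  refine ⟨hf, ?_⟩
  ext w
  have hgw := hrel ((⟨(ℓ : ℝ)⁻¹, inv_pos.mpr hℓ0⟩ : {x : ℝ // 0 < x}) • w) w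
    (by simp [mul_inv_cancel_left₀ (Nat.cast_ne_zero.mpr hℓ.ne_zero : (ℓ : ℂ) ≠ 0)])
  simpa [hf, hℓ.ne_zero] using hgw.symm

/-- for `k > 0` the intersection `M_k(Γ₀(N/ℓ)) ∩ W_ℓ(M_k(Γ₀(N/ℓ)))` is zero,
so the sum `M_k(Γ₀(N/ℓ)) + W_ℓ(M_k(Γ₀(N/ℓ)))` is direct. -/
theorem inter_atkinLehner_image_eq_zero (N ℓ : ℕ) (hN : 0 < N) (hℓ : ℓ.Prime)
    (hdvd : ℓ ∣ N) (hndvd : ¬ ℓ ^ 2 ∣ N) (a b : ℤ)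
    (hab : (ℓ : ℤ) * b - a * ((N / ℓ : ℕ) : ℤ) = 1) (k : ℕ) (hk : 0 < k)
    (f g : ModularForm (Gamma0 (N / ℓ)) (k : ℤ))
    (hfg : ∀ z w : ℍ,
      (w : ℂ) = ((ℓ : ℂ) * z + (a : ℂ)) / ((N : ℂ) * z + (ℓ : ℂ) * (b : ℂ)) →
      f z = (ℓ : ℂ) ^ (k : ℤ) *
        ((N : ℂ) * z + (ℓ : ℂ) * (b : ℂ)) ^ (-(k : ℤ)) * g w) :
    f = 0 ∧ g = 0 :=
  inter_atkinLehner_image_eq_zero_general N ℓ hℓ hdvd a b hab k hk f g hfg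
end

section
/- Let p be a prime number. Then p·B_{p−1} is a p-integral rational number and p·B_{p−1} ≡ −1 (mod p); precisely, there exists a rational number r whose denominator is not divisible by p (i.e. r is p-integral) such that p·B_{p−1} = −1 + p·r. Consequently, the denominator of the Bernoulli number B_{p−1} (in lowest terms) is divisible by p. -/
/-!
By von Staudt–Clausen, `B_{p-1} + ∑ 1/q` is an integer, the sum running over the primes `q`
with `q - 1 ∣ p - 1`. The prime `p` itself occurs, and every other `1/q` is `p`-integral, so
`B_{p-1} + 1/p` is `p`-integral; multiplying by `p` gives the congruence, and subtracting `1/p`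
shows that `p` divides the denominator of `B_{p-1}`. For `p = 2` this is `B_1 = -1/2`.
-/

open Finset

namespace Rat

variable {p : ℕ} [Fact p.Prime]

lemma mem_padicValuation_integer_iff {x : ℚ} :
    x ∈ (padicValuation p).integer ↔ ¬ p ∣ x.den :=
  padicValuation_le_one_iff

lemma one_div_prime_mem_padicValuation_integer {q : ℕ} (hq : q.Prime) (hqp : q ≠ p) :
    (1 / q : ℚ) ∈ (padicValuation p).integer := by
  rw [mem_padicValuation_integer_iff, one_div, inv_natCast_den, if_neg hq.ne_zero]
  exact fun h ↦ hqp ((Nat.prime_dvd_prime_iff_eq Fact.out hq).1 h).symm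

lemma one_div_self_notMem_padicValuation_integer :
    (1 / p : ℚ) ∉ (padicValuation p).integer := by
  rw [mem_padicValuation_integer_iff, one_div, inv_natCast_den,
    if_neg (Nat.Prime.ne_zero Fact.out), not_not]

lemma add_one_div_mem_padicValuation_integer {s : Finset ℕ} (hs : ∀ q ∈ s, q.Prime)
    (hps : p ∈ s) {x : ℚ} (hx : x + ∑ q ∈ s, (1 : ℚ) / q ∈ Set.range Int.cast) :
    x + 1 / p ∈ (padicValuation p).integer := by
  obtain ⟨n, hn⟩ := hx
  rw [← add_sum_erase s _ hps, ← add_assoc] at hn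
  have hrest : ∑ q ∈ s.erase p, (1 : ℚ) / q ∈ (padicValuation p).integer :=
    Subring.sum_mem _ fun q hq ↦
      one_div_prime_mem_padicValuation_integer (hs q (mem_of_mem_erase hq)) (ne_of_mem_erase hq)
  rw [eq_sub_of_add_eq hn.symm]
  exact sub_mem (intCast_mem _ n) hrest

lemma dvd_den_of_add_one_div_mem_padicValuation_integer {x : ℚ}
    (hx : x + 1 / p ∈ (padicValuation p).integer) : p ∣ x.den := by
  by_contra hpx
  apply one_div_self_notMem_padicValuation_integer (p := p)
  simpa using sub_mem hx (mem_padicValuation_integer_iff.2 hpx)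

end Rat

open Rat in
lemma bernoulli_sub_one_add_one_div_mem_padicValuation_integer (p : ℕ) [hp : Fact p.Prime] :
    bernoulli (p - 1) + 1 / p ∈ (padicValuation p).integer := by
  obtain rfl | hp2 := eq_or_ne p 2
  · norm_num [bernoulli_one]
  obtain ⟨k, hk⟩ := hp.out.odd_of_ne_two hp2
  have hpk : p - 1 = 2 * k := by omega
  rw [hpk]
  refine add_one_div_mem_padicValuation_integer (fun q hq ↦ (mem_filter.1 hq).2.1) ?_
    (Bernoulli.vonStaudt_clausen k)
  exact mem_filter.2 ⟨mem_range.2 (by omega), hp.out, hpk ▸ dvd_rfl⟩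

/-- for a prime `p`, the rational number `p·B_{p−1}` is `p`-integral and
congruent to `−1` mod `p`: `p·B_{p−1} = −1 + p·r` with `r` `p`-integral. Consequently the
denominator of `B_{p−1}` is divisible by `p`. -/
theorem p_mul_bernoulli_sub_one_congr_neg_one (p : ℕ) (hp : p.Prime) :
    (∃ r : ℚ, ¬ p ∣ r.den ∧ (p : ℚ) * bernoulli (p - 1) = -1 + (p : ℚ) * r) ∧
      p ∣ (bernoulli (p - 1)).den := by
  have := Fact.mk hp
  have hB := bernoulli_sub_one_add_one_div_mem_padicValuation_integer p
  refine ⟨⟨_, Rat.mem_padicValuation_integer_iff.1 hB, ?_⟩,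
    Rat.dvd_den_of_add_one_div_mem_padicValuation_integer hB⟩
  have : (p : ℚ) ≠ 0 := by exact_mod_cast hp.ne_zero
  field_simp
  ring
end
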